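/- Let ν be an infinite regular cardinal with ν^{<ν} = ν. Then Cl_ν and Ns_ν are almost Baire subsets of ν^ν. -/

import Mathlib

universe u

noncomputable section

/-! ## Sequences of ordinals

`SeqLT o v` is the set `v^{<o}` of all sequences of ordinals `< v` of length `< o`
(for `o > 0`; values beyond the length are normalized to `0`).
`SeqFull o v` is the generalized Baire space `v^o` of all functions from ordinals `< o`
to ordinals `< v`. -/

/-- An element of `v^{<o}`: a sequence of ordinals `< v` of length `< o`. -/
structure SeqLT (o v : Ordinal.{u}) : Type (u + 1) where
  len : Ordinal.{u}
  len_lt : len < o ⊔ 1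
  val : Ordinal.{u} → Ordinal.{u}
  val_lt : ∀ β, β < len → val β < v
  val_zero : ∀ β, len ≤ β → val β = 0

namespace SeqLT

variable {o v : Ordinal.{u}}

/-- `s ⊆ t`, i.e. `t` end-extends `s`. -/
protected def le (s t : SeqLT o v) : Prop :=
  s.len ≤ t.len ∧ ∀ β, β < s.len → s.val β = t.val β

/-- `s ⊊ t`, i.e. `t` properly end-extends `s`. -/
protected def slt (s t : SeqLT o v) : Prop :=
  s.le t ∧ s.len < t.len

/-- The empty sequence. -/
protected def empty (o v : Ordinal.{u}) : SeqLT o v where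
  len := 0
  len_lt := lt_sup_iff.mpr (Or.inr zero_lt_one)
  val := fun _ => 0
  val_lt := fun β h => absurd h (not_lt.mpr (zero_le (a := β) : (0 : Ordinal.{u}) ≤ β))
  val_zero := fun _ _ => rfl

/-- `s⌢⟨β⟩`: the sequence `s` extended by the single value `β`. -/
def snoc (s : SeqLT o v) (β : Ordinal.{u}) : SeqLT o v :=
  if h : s.len + 1 < o ⊔ 1 ∧ β < v then
    { len := s.len + 1
      len_lt := h.1
      val := fun γ => if γ = s.len then β else s.val γ
      val_lt := fun γ hγ => by
        rcases eq_or_ne γ s.len with rfl | hne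
        · simpa using h.2
        · simp only [if_neg hne]
          refine s.val_lt γ (lt_of_le_of_ne ?_ hne)
          rw [Ordinal.add_one_eq_succ] at hγ
          exact Order.lt_succ_iff.mp hγ
      val_zero := fun γ hγ => by
        have h1 : s.len < γ :=
          lt_of_lt_of_le (by rw [Ordinal.add_one_eq_succ]; exact Order.lt_succ s.len) hγ
        simp only [if_neg h1.ne']
        exact s.val_zero γ h1.le }
  else s

protected theorem le_refl (s : SeqLT o v) : s.le s :=
  ⟨le_rfl, fun _ _ => rfl⟩

protected theorem le_trans {s t u : SeqLT o v} (h1 : s.le t) (h2 : t.le u) : s.le u :=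
  ⟨h1.1.trans h2.1, fun β hβ => (h1.2 β hβ).trans (h2.2 β (lt_of_lt_of_le hβ h1.1))⟩

end SeqLT

/-- An element of the generalized Baire space `v^o`. -/
structure SeqFull (o v : Ordinal.{u}) : Type (u + 1) where
  val : Ordinal.{u} → Ordinal.{u}
  val_lt : ∀ β, β < o → val β < v
  val_zero : ∀ β, o ≤ β → val β = 0

/-- The restriction `x ↾ β` of `x : v^o` to an ordinal `β < o`. -/
def SeqFull.res {o v : Ordinal.{u}} (x : SeqFull o v) (β : Ordinal.{u}) : SeqLT o v :=
  if h : β < o ⊔ 1 then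
    { len := β
      len_lt := h
      val := fun γ => if γ < β then x.val γ else 0
      val_lt := fun γ hγ => by
        simp only [if_pos hγ]
        rcases lt_sup_iff.mp h with h' | h'
        · exact x.val_lt γ (hγ.trans h')
        · rw [Ordinal.lt_one_iff_zero] at h'
          exact absurd (h' ▸ hγ) (not_lt.mpr (zero_le (a := γ) : (0 : Ordinal.{u}) ≤ γ))
      val_zero := fun γ hγ => if_neg (not_lt.mpr hγ) }
  else SeqLT.empty o v

/-- `s ⊆ x`: the sequence `s` is an initial segment of `x : v^o`. -/
def SeqLT.prefixOf {o v : Ordinal.{u}} (s : SeqLT o v) (x : SeqFull o v) : Prop :=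
  ∀ β, β < s.len → s.val β = x.val β

/-! ## The bounded topology -/

/-- The basic open set `N_t`. -/
def basicOpen {o v : Ordinal.{u}} (t : SeqLT o v) : Set (SeqFull o v) :=
  {x | t.prefixOf x}

/-- The bounded (standard) topology on the generalized Baire space, generated by the
basic open sets `N_t`. -/
instance (o v : Ordinal.{u}) : TopologicalSpace (SeqFull o v) :=
  TopologicalSpace.generateFrom {U | ∃ t : SeqLT o v, U = basicOpen t}

/-- `A` is a nowhere dense subset of `B` (in the subspace topology on `B`). -/
def NowhereDenseIn {o v : Ordinal.{u}} (A B : Set (SeqFull o v)) : Prop :=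
  A ⊆ B ∧ interior (closure {x : ↥B | (x : SeqFull o v) ∈ A}) = ∅

/-- `A` is `o`-meager in `B`: `A ∩ B` is the union of (card of) `o` many nowhere dense
subsets of `B`. -/
def MeagerIn {o v : Ordinal.{u}} (A B : Set (SeqFull o v)) : Prop :=
  ∃ F : {β : Ordinal.{u} // β < o} → Set (SeqFull o v),
    (∀ i, NowhereDenseIn (F i) B) ∧ A ∩ B = ⋃ i, F i

/-- `A` is comeager in `B`: `B \ A` is meager in `B`. -/
def ComeagerIn {o v : Ordinal.{u}} (A B : Set (SeqFull o v)) : Prop :=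
  MeagerIn (B \ A) B

/-- `A` has the `o`-Baire property: for some open `U`, `A △ U` is meager. -/
def BaireSet {o v : Ordinal.{u}} (A : Set (SeqFull o v)) : Prop :=
  ∃ U : Set (SeqFull o v), IsOpen U ∧ MeagerIn (symmDiff A U) Set.univ

/-! ## Homomorphisms of `v^{<o}` -/

/-- A homomorphism: strictly extension-preserving map of `v^{<o}` to itself. -/
def IsHom {o v : Ordinal.{u}} (f : SeqLT o v → SeqLT o v) : Prop :=
  ∀ s t : SeqLT o v, s.slt t → (f s).slt (f t)

/-- `f` is dense: for every `s` and every `t ⊇ f(s)` there is `β < v` with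
`f(s⌢⟨β⟩) ⊇ t`. -/
def IsDenseMap {o v : Ordinal.{u}} (f : SeqLT o v → SeqLT o v) : Prop :=
  ∀ s t : SeqLT o v, (f s).le t → ∃ β, β < v ∧ t.le (f (s.snoc β))

/-- `u = ⋃_{α<γ} s α` for a chain `s`. -/
def IsUnionOfChain {o v : Ordinal.{u}} (u : SeqLT o v) (γ : Ordinal.{u})
    (s : Ordinal.{u} → SeqLT o v) : Prop :=
  (∀ α, α < γ → (s α).le u) ∧ ∀ β, β < u.len → ∃ α, α < γ ∧ β < (s α).len

/-- `f` is continuous: for every limit `γ < o` and every strictly increasing sequence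
`⟨s_α : α < γ⟩`, `f(⋃_{α<γ} s_α) = ⋃_{α<γ} f(s_α)`. -/
def IsContinuousMap {o v : Ordinal.{u}} (f : SeqLT o v → SeqLT o v) : Prop :=
  ∀ γ : Ordinal.{u}, Order.IsSuccLimit γ → γ < o →
    ∀ s : Ordinal.{u} → SeqLT o v, (∀ α β, α < β → β < γ → (s α).slt (s β)) →
      ∀ u : SeqLT o v, IsUnionOfChain u γ s → IsUnionOfChain (f u) γ fun α => f (s α)

/-- `y = f*(x) = ⋃_{α<o} f(x↾α)` for a homomorphism `f`. -/
def FStarVal {o v : Ordinal.{u}} (f : SeqLT o v → SeqLT o v) (x y : SeqFull o v) : Prop :=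
  (∀ α, α < o → (f (x.res α)).prefixOf y) ∧
    ∀ β, β < o → ∃ α, α < o ∧ β < (f (x.res α)).len

/-! ## Clubs and the almost Baire property -/

/-- `C` is a club (closed unbounded set) in the ordinal `o`. -/
def IsClubIn (C : Set Ordinal.{u}) (o : Ordinal.{u}) : Prop :=
  (∀ γ ∈ C, γ < o) ∧ (∀ β, β < o → ∃ γ ∈ C, β ≤ γ) ∧
    ∀ β, β < o → 0 < β → (∀ γ, γ < β → ∃ ξ ∈ C, γ < ξ ∧ ξ < β) → β ∈ C

/-- The set of functions coding elements of the club filter as characteristic functions. -/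
def ClSet (o v : Ordinal.{u}) : Set (SeqFull o v) :=
  {x | ∃ C : Set Ordinal.{u}, IsClubIn C o ∧ ∀ i ∈ C, x.val i ≠ 0}

/-- The set of functions coding elements of the nonstationary ideal. -/
def NsSet (o v : Ordinal.{u}) : Set (SeqFull o v) :=
  {x | ∃ C : Set Ordinal.{u}, IsClubIn C o ∧ ∀ i ∈ C, x.val i = 0}

/-- `A` is almost Baire: there is a dense homomorphism `f` with `ran f* ⊆ A`, or a dense
continuous homomorphism `f` with `f ∅ = ∅` and `ran f* ⊆ Aᶜ`. -/
def AlmostBaire {o v : Ordinal.{u}} (A : Set (SeqFull o v)) : Prop :=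
  ∃ f : SeqLT o v → SeqLT o v, IsHom f ∧ IsDenseMap f ∧
    ((∀ x y, FStarVal f x y → y ∈ A) ∨
      ((∀ x y, FStarVal f x y → y ∉ A) ∧ IsContinuousMap f ∧
        f (SeqLT.empty o v) = SeqLT.empty o v))

/-! ## Banach–Mazur games of length `o`

A run of the game is a strictly increasing sequence `⟨s_α : α < o⟩` in `v^{<o}`;
player I plays at even positions (`0` and limits count as even), player II at odd ones.
In the game `G^t` the first move of player I must extend `t`; taking `t = ∅` gives the
plain Banach–Mazur game. -/

/-- `γ` is an even ordinal (`0` and limits are even). -/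
def EvenOrd (γ : Ordinal.{u}) : Prop := ∃ δ : Ordinal.{u}, γ = 2 * δ

/-- `γ` is an odd ordinal. -/
def OddOrd (γ : Ordinal.{u}) : Prop := ∃ δ : Ordinal.{u}, γ = 2 * δ + 1

/-- The moves of a (partial) run, as a function on ordinals. -/
abbrev Play (o v : Ordinal.{u}) := Ordinal.{u} → SeqLT o v

/-- A strategy: given the length of the current position and the moves so far,
produce the next move. -/
abbrev Strat (o v : Ordinal.{u}) := Ordinal.{u} → Play o v → SeqLT o v

/-- `p` is a legal partial run of length `γ` of the game `G^t`: strictly increasing moves,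
the first move extends `t`, and the moves beyond `γ` are normalized to `∅`. -/
def IsPos {o v : Ordinal.{u}} (t : SeqLT o v) (p : Play o v) (γ : Ordinal.{u}) : Prop :=
  (∀ α β, α < β → β < γ → (p α).slt (p β)) ∧ (0 < γ → t.le (p 0)) ∧
    ∀ α, γ ≤ α → p α = SeqLT.empty o v

/-- The restriction of a run to its first `γ` moves. -/
def resPlay {o v : Ordinal.{u}} (p : Play o v) (γ : Ordinal.{u}) : Play o v :=
  fun α => if α < γ then p α else SeqLT.empty o v

/-- `m` is a legal move at the position `p` of length `γ` in the game `G^t`. -/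
def MoveOK {o v : Ordinal.{u}} (t : SeqLT o v) (p : Play o v) (γ : Ordinal.{u})
    (m : SeqLT o v) : Prop :=
  (∀ α, α < γ → (p α).slt m) ∧ (γ = 0 → t.le m)

/-- `σ` is a strategy for player I in `G^t`: it assigns a legal move to every legal
position of even length. -/
def LegalI {o v : Ordinal.{u}} (t : SeqLT o v) (σ : Strat o v) : Prop :=
  ∀ γ, γ < o → EvenOrd γ → ∀ p, IsPos t p γ → MoveOK t p γ (σ γ p)

/-- `σ` is a strategy for player II in `G^t`: it assigns a legal move to every legal
position of odd length. -/
def LegalII {o v : Ordinal.{u}} (t : SeqLT o v) (σ : Strat o v) : Prop :=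
  ∀ γ, γ < o → OddOrd γ → ∀ p, IsPos t p γ → MoveOK t p γ (σ γ p)

/-- The first `γ` moves of `p` follow the strategy `σ` of player I. -/
def FollowsI {o v : Ordinal.{u}} (σ : Strat o v) (p : Play o v) (γ : Ordinal.{u}) : Prop :=
  ∀ α, α < γ → EvenOrd α → p α = σ α (resPlay p α)

/-- The first `γ` moves of `p` follow the strategy `σ` of player II. -/
def FollowsII {o v : Ordinal.{u}} (σ : Strat o v) (p : Play o v) (γ : Ordinal.{u}) : Prop :=
  ∀ α, α < γ → OddOrd α → p α = σ α (resPlay p α)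

/-- `x = ⋃_{α<o} p α` is the outcome of the complete run `p`. -/
def IsOutcome {o v : Ordinal.{u}} (p : Play o v) (x : SeqFull o v) : Prop :=
  (∀ α, α < o → (p α).prefixOf x) ∧ ∀ β, β < o → ∃ α, α < o ∧ β < (p α).len

/-- Player I has a winning strategy in the Banach–Mazur game `G^t(A)` of length `o`. -/
def WinIStrat {o v : Ordinal.{u}} (t : SeqLT o v) (A : Set (SeqFull o v)) : Prop :=
  ∃ σ : Strat o v, LegalI t σ ∧
    ∀ p : Play o v, IsPos t p o → FollowsI σ p o → ∃ x, IsOutcome p x ∧ x ∈ A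

/-- Player II has a winning strategy in the Banach–Mazur game `G^t(A)` of length `o`. -/
def WinIIStrat {o v : Ordinal.{u}} (t : SeqLT o v) (A : Set (SeqFull o v)) : Prop :=
  ∃ σ : Strat o v, LegalII t σ ∧
    ∀ p : Play o v, IsPos t p o → FollowsII σ p o → ∃ x, IsOutcome p x ∧ x ∉ A

/-- `σ` is a tactic for player II: its moves depend only on the union of the previous moves. -/
def IsTacticII {o v : Ordinal.{u}} (t : SeqLT o v) (σ : Strat o v) : Prop :=
  ∃ f : SeqLT o v → SeqLT o v, ∀ γ, γ < o → OddOrd γ → ∀ p, IsPos t p γ →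
    ∀ u, IsUnionOfChain u γ p → σ γ p = f u

/-- Player II has a winning tactic in the Banach–Mazur game `G^t(A)` of length `o`. -/
def WinIITactic {o v : Ordinal.{u}} (t : SeqLT o v) (A : Set (SeqFull o v)) : Prop :=
  ∃ σ : Strat o v, LegalII t σ ∧ IsTacticII t σ ∧
    ∀ p : Play o v, IsPos t p o → FollowsII σ p o → ∃ x, IsOutcome p x ∧ x ∉ A

/-! ## Trees and perfect sets -/

/-- A subtree of `v^{<o}`: a downwards closed set of sequences. -/
def IsSubtree {o v : Ordinal.{u}} (T : Set (SeqLT o v)) : Prop :=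
  ∀ s ∈ T, ∀ r : SeqLT o v, r.le s → r ∈ T

/-- `T` is closed: every strictly increasing sequence in `T` of length `< o` has an
upper bound in `T`. -/
def TreeClosed {o v : Ordinal.{u}} (T : Set (SeqLT o v)) : Prop :=
  ∀ γ : Ordinal.{u}, γ < o → ∀ s : Ordinal.{u} → SeqLT o v,
    (∀ α β, α < β → β < γ → (s α).slt (s β)) → (∀ α, α < γ → s α ∈ T) →
      ∃ b ∈ T, ∀ α, α < γ → (s α).le b

/-- `t` is a direct successor of `s`. -/
def IsDirectSucc {o v : Ordinal.{u}} (s t : SeqLT o v) : Prop :=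
  s.slt t ∧ t.len = s.len + 1

/-- `T` is a perfect tree: a (nonempty) closed subtree whose splitting nodes are cofinal. -/
def IsPerfectTree {o v : Ordinal.{u}} (T : Set (SeqLT o v)) : Prop :=
  T.Nonempty ∧ IsSubtree T ∧ TreeClosed T ∧
    ∀ s ∈ T, ∃ t ∈ T, s.le t ∧
      ∃ t₁ ∈ T, ∃ t₂ ∈ T, IsDirectSucc t t₁ ∧ IsDirectSucc t t₂ ∧ t₁ ≠ t₂

/-- The body `[T]` of a tree `T`: the set of branches of length `o` through `T`. -/
def treeBody {o v : Ordinal.{u}} (T : Set (SeqLT o v)) : Set (SeqFull o v) :=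
  {x | ∀ α, α < o → x.res α ∈ T}

/-! Since `ν^{<ν} = ν`, there is an enumeration `g` of `ν^{<ν}` by the ordinals below `ν`.
Fix a value `c < ν` and map `s` to a sequence built by recursion along `s`: at a successor step
`γ + 1` extend to `g (s γ)` whenever it extends what has been built so far, and after every step,
limit steps included, append the marker value `c`. Extending to `g β` at will makes the map a
dense homomorphism. For every `x`, the positions of the markers in `f*(x)` are unbounded, and
they are closed because at a limit step the marker is placed exactly at the supremum of the
earlier stages. So `f*(x)` takes the value `c` on a club: with `c = 1` it lies in `Cl_ν`, and with
`c = 0` in `Ns_ν`. -/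

open Ordinal Order Set

namespace SeqLT

variable {o v : Ordinal.{u}}

theorem ext_of_len_eq {s t : SeqLT o v} (hlen : s.len = t.len) (hval : ∀ β, s.val β = t.val β) :
    s = t := by
  cases s; cases t
  cases hlen
  cases funext hval
  rfl

instance : PartialOrder (SeqLT o v) where
  le := SeqLT.le
  lt := SeqLT.slt
  le_refl := SeqLT.le_refl
  le_trans _ _ _ := SeqLT.le_trans
  lt_iff_le_not_ge s t := by
    refine ⟨fun h => ⟨h.1, fun h' => h.2.not_ge h'.1⟩, fun h => ⟨h.1, ?_⟩⟩
    refine h.1.1.lt_of_ne fun hlen => h.2 ⟨hlen.ge, fun β hβ => ?_⟩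
    exact (h.1.2 β (hlen ▸ hβ)).symm
  le_antisymm s t hst hts := by
    refine ext_of_len_eq (hst.1.antisymm hts.1) fun β => ?_
    rcases lt_or_ge β s.len with hβ | hβ
    · exact hst.2 β hβ
    · rw [s.val_zero β hβ, t.val_zero β (hts.1.trans hβ)]

theorem len_lt_of_isSuccLimit (ho : IsSuccLimit o) (s : SeqLT o v) : s.len < o :=
  s.len_lt.trans_eq (sup_eq_left.mpr (one_le_iff_pos.mpr ho.bot_lt))

theorem len_add_one_lt_of_isSuccLimit (ho : IsSuccLimit o) (s : SeqLT o v) :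
    s.len + 1 < o ⊔ 1 :=
  lt_sup_of_lt_left (ho.add_one_lt (s.len_lt_of_isSuccLimit ho))

section snoc

variable {s : SeqLT o v} {c : Ordinal.{u}} (hs : s.len + 1 < o ⊔ 1) (hc : c < v)
include hs hc

theorem len_snoc : (s.snoc c).len = s.len + 1 := by
  rw [snoc, dif_pos ⟨hs, hc⟩]

theorem snoc_val_len : (s.snoc c).val s.len = c := by
  rw [snoc, dif_pos ⟨hs, hc⟩]
  exact if_pos rfl

theorem snoc_val_of_ne {β : Ordinal.{u}} (hβ : β ≠ s.len) : (s.snoc c).val β = s.val β := by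
  rw [snoc, dif_pos ⟨hs, hc⟩]
  exact if_neg hβ

theorem lt_snoc : s < s.snoc c :=
  ⟨⟨by rw [len_snoc hs hc]; exact le_self_add, fun _ hβ => (snoc_val_of_ne hs hc hβ.ne).symm⟩,
    by rw [len_snoc hs hc]; exact lt_add_one _⟩

end snoc

open scoped Classical in
def cover (s t : SeqLT o v) : SeqLT o v := if s ≤ t then t else s

theorem le_cover (s t : SeqLT o v) : s ≤ s.cover t := by
  unfold cover
  split_ifs with h
  exacts [h, le_rfl]

theorem cover_of_le {s t : SeqLT o v} (h : s ≤ t) : s.cover t = t := if_pos h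

open scoped Classical in
def union {ι : Type*} [Small.{u} ι] (s : ι → SeqLT o v) : SeqLT o v :=
  if hlen : ⨆ i, (s i).len < o ⊔ 1 then
    { len := ⨆ i, (s i).len
      len_lt := hlen
      val := fun β => if h : ∃ i, β < (s i).len then (s h.choose).val β else 0
      val_lt := fun β hβ => by
        have h : ∃ i, β < (s i).len := Ordinal.lt_iSup_iff.mp hβ
        rw [dif_pos h]
        exact (s h.choose).val_lt β h.choose_spec
      val_zero := fun β hβ => dif_neg fun ⟨i, hi⟩ =>
        hβ.not_gt (hi.trans_le (Ordinal.le_iSup (fun i => (s i).len) i)) }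
  else SeqLT.empty o v

section union

variable {ι : Type*} [Small.{u} ι] {s : ι → SeqLT o v} (hlen : ⨆ i, (s i).len < o ⊔ 1)
include hlen

theorem len_union : (union s).len = ⨆ i, (s i).len := by
  rw [union, dif_pos hlen]

theorem le_union (hdir : Directed (· ≤ ·) s) (i : ι) : s i ≤ union s := by
  rw [union, dif_pos hlen]
  refine ⟨Ordinal.le_iSup (fun i => (s i).len) i, fun β hβ => ?_⟩
  have h : ∃ i, β < (s i).len := ⟨i, hβ⟩
  dsimp only
  rw [dif_pos h]
  obtain ⟨k, hik, hjk⟩ := hdir i h.choose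
  exact (hik.2 β hβ).trans (hjk.2 β h.choose_spec).symm

end union

theorem iSup_len_lt_of_isRegular {ν : Cardinal.{u}} (hν : ν.IsRegular) {l : Ordinal.{u}}
    (hl : l < ν.ord) (s : Iio l → SeqLT ν.ord v) : ⨆ a, (s a).len < ν.ord ⊔ 1 := by
  refine lt_sup_of_lt_left (Ordinal.lift_iSup_lt_of_lt_cof ?_ fun a =>
    (s a).len_lt_of_isSuccLimit (Cardinal.isSuccLimit_ord hν.aleph0_le))
  rwa [← Ordinal.lift_cof, hν.cof_ord, Cardinal.mk_Iio_ordinal, Cardinal.lift_lift,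
    Cardinal.lift_lt, ← Cardinal.lt_ord]

end SeqLT

theorem isClubIn_setOf_add_one_mem_image {o : Ordinal.{u}} {L : Ordinal.{u} → Ordinal.{u}}
    (hmono : StrictMonoOn L (Iio o)) (hsucc : ∀ a < o, ¬ IsSuccLimit (L a))
    (hlim : ∀ l < o, IsSuccLimit l → L l = (⨆ a : Iio l, L a) + 1)
    (hlt : ∀ a < o, L a < o) (hunb : ∀ β < o, ∃ a < o, β < L a) :
    IsClubIn {m | m + 1 ∈ L '' Iio o} o := by
  refine ⟨fun m ⟨a, ha, hm⟩ => (lt_add_one m).trans (hm ▸ hlt a ha), fun β hβ => ?_, ?_⟩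
  · obtain ⟨a, ha, hβa⟩ := hunb β hβ
    obtain ⟨m, hm⟩ : ∃ m, L a = m + 1 := by
      rcases zero_or_succ_or_isSuccLimit (L a) with h | ⟨m, hm⟩ | h
      · exact absurd (h ▸ hβa) not_lt_zero
      · exact ⟨m, hm.symm.trans (succ_eq_add_one m)⟩
      · exact absurd h (hsucc a ha)
    exact ⟨m, ⟨a, ha, hm⟩, lt_add_one_iff.mp (hm ▸ hβa)⟩
  intro β hβ hβ0 hacc
  have hβlim : IsSuccLimit β := by
    rcases zero_or_succ_or_isSuccLimit β with h | ⟨δ, rfl⟩ | h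
    · exact absurd h hβ0.ne'
    · obtain ⟨ξ, -, hδξ, hξ⟩ := hacc δ (lt_succ δ)
      exact absurd (lt_succ_iff.mp hξ) hδξ.not_ge
    · exact h
  obtain ⟨l, ⟨hl, hβl⟩, hmin⟩ := wellFounded_lt.has_min {a | a < o ∧ β < L a} (hunb β hβ)
  have hle : ∀ a < l, L a ≤ β := fun a hal => not_lt.mp fun h => hmin a ⟨hal.trans hl, h⟩ hal
  have hsup : ⨆ a : Iio l, L a = β := by
    refine le_antisymm (Ordinal.iSup_le fun a => hle a a.2) (not_lt.mp fun hlt => ?_)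
    obtain ⟨ξ, ⟨a, ha, hξa⟩, hsupξ, hξβ⟩ := hacc _ hlt
    have hal : a < l := lt_of_not_ge fun hla =>
      hξβ.not_ge (lt_add_one_iff.mp (hξa ▸ hβl.trans_le (hmono.monotoneOn hl ha hla)))
    exact (hsupξ.trans_le (hξa ▸ (lt_add_one ξ).le)).not_ge
      (Ordinal.le_iSup (fun a : Iio l => L a) ⟨a, hal⟩)
  rcases zero_or_succ_or_isSuccLimit l with rfl | ⟨b, rfl⟩ | hl'
  · exact absurd (hsup ▸ Ordinal.iSup_le fun a => absurd (mem_Iio.mp a.2) not_lt_zero) hβ0.not_ge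
  · have hbo : b < o := (lt_succ b).trans hl
    have hb : L b = β := by
      refine le_antisymm (hle b (lt_succ b)) (hsup ▸ Ordinal.iSup_le fun a => ?_)
      have hab : (a : Ordinal) ≤ b := lt_succ_iff.mp a.2
      exact hmono.monotoneOn (hab.trans_lt hbo) hbo hab
    exact absurd (hb ▸ hβlim) (hsucc b hbo)
  · exact ⟨l, hl, by rw [hlim l hl hl', hsup]⟩

section Marker

variable {o v : Ordinal.{u}} (g : Ordinal.{u} → SeqLT o v) (c : Ordinal.{u})

def markerStage (w : Ordinal.{u} → Ordinal.{u}) (α : Ordinal.{u}) : SeqLT o v :=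
  limitRecOn α (SeqLT.empty o v) (fun γ s => (s.cover (g (w γ))).snoc c)
    fun l _ s => (SeqLT.union fun β : Iio l => s β β.2).snoc c

def markerHom (s : SeqLT o v) : SeqLT o v := markerStage g c s.val s.len

variable (w : Ordinal.{u} → Ordinal.{u})

theorem markerStage_zero : markerStage g c w 0 = SeqLT.empty o v :=
  limitRecOn_zero ..

theorem markerStage_add_one (γ : Ordinal.{u}) :
    markerStage g c w (γ + 1) = ((markerStage g c w γ).cover (g (w γ))).snoc c :=
  limitRecOn_add_one ..

theorem markerStage_of_isSuccLimit {l : Ordinal.{u}} (hl : IsSuccLimit l) :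
    markerStage g c w l = (SeqLT.union fun β : Iio l => markerStage g c w β).snoc c :=
  limitRecOn_limit _ _ _ _ hl

theorem markerStage_congr {w' : Ordinal.{u} → Ordinal.{u}} {α : Ordinal.{u}}
    (hw : ∀ β < α, w β = w' β) : markerStage g c w α = markerStage g c w' α := by
  induction α using limitRecOn with
  | zero => rw [markerStage_zero, markerStage_zero]
  | add_one γ ih =>
    rw [markerStage_add_one, markerStage_add_one, hw γ (lt_add_one γ),
      ih fun β hβ => hw β (hβ.trans (lt_add_one γ))]
  | limit l hl ih =>
    rw [markerStage_of_isSuccLimit g c w hl, markerStage_of_isSuccLimit g c w' hl]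
    congr 2
    funext β
    exact ih β β.2 fun γ hγ => hw γ (hγ.trans β.2)

theorem exists_markerStage_eq_snoc {a : Ordinal.{u}} (ha : a ≠ 0) :
    ∃ s : SeqLT o v, markerStage g c w a = s.snoc c := by
  induction a using limitRecOn with
  | zero => exact absurd rfl ha
  | add_one γ _ => exact ⟨_, markerStage_add_one g c w γ⟩
  | limit l hl _ => exact ⟨_, markerStage_of_isSuccLimit g c w hl⟩

theorem markerHom_res (x : SeqFull o v) {a : Ordinal.{u}} (ha : a < o) :
    markerHom g c (x.res a) = markerStage g c x.val a := by
  have ha' : a < o ⊔ 1 := lt_sup_of_lt_left ha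
  simp only [markerHom, SeqFull.res, dif_pos ha']
  exact markerStage_congr g c _ fun β hβ => if_pos hβ

end Marker

section LimitOrd

variable {o v : Ordinal.{u}} (ho : IsSuccLimit o) (g : Ordinal.{u} → SeqLT o v) {c : Ordinal.{u}}
  (hc : c < v)
include ho hc

theorem not_isSuccLimit_len_markerStage (w : Ordinal.{u} → Ordinal.{u}) (a : Ordinal.{u}) :
    ¬ IsSuccLimit (markerStage g c w a).len := by
  rcases eq_or_ne a 0 with rfl | ha
  · rw [markerStage_zero]
    exact not_isSuccLimit_bot
  · obtain ⟨s, hs⟩ := exists_markerStage_eq_snoc g c w ha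
    rw [hs, SeqLT.len_snoc (s.len_add_one_lt_of_isSuccLimit ho) hc]
    exact not_isSuccLimit_add_one s.len

theorem markerStage_val_of_len_eq_add_one (w : Ordinal.{u} → Ordinal.{u}) {a m : Ordinal.{u}}
    (hm : (markerStage g c w a).len = m + 1) : (markerStage g c w a).val m = c := by
  rcases eq_or_ne a 0 with rfl | ha
  · rw [markerStage_zero] at hm
    exact absurd hm.symm (add_one_ne_zero m)
  · obtain ⟨s, hs⟩ := exists_markerStage_eq_snoc g c w ha
    have hs' := s.len_add_one_lt_of_isSuccLimit ho
    rw [hs, SeqLT.len_snoc hs' hc, add_one_inj] at hm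
    rw [hs, ← hm, SeqLT.snoc_val_len hs' hc]

theorem markerHom_isDenseMap (hg : SurjOn g (Iio v) univ) : IsDenseMap (markerHom g c) := by
  intro s t hst
  obtain ⟨β, hβ, rfl⟩ := hg (mem_univ t)
  have hs := s.len_add_one_lt_of_isSuccLimit ho
  refine ⟨β, hβ, ?_⟩
  change markerStage g c s.val s.len ≤ g β at hst
  show g β ≤ markerStage g c (s.snoc β).val (s.snoc β).len
  rw [SeqLT.len_snoc hs hβ, markerStage_add_one,
    markerStage_congr g c _ (w' := s.val) fun γ hγ => SeqLT.snoc_val_of_ne hs hβ hγ.ne,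
    SeqLT.snoc_val_len hs hβ, SeqLT.cover_of_le hst]
  exact (SeqLT.lt_snoc (SeqLT.len_add_one_lt_of_isSuccLimit ho _) hc).le

end LimitOrd

section Regular

variable {ν : Cardinal.{u}} (hν : ν.IsRegular) {v : Ordinal.{u}}
  (g : Ordinal.{u} → SeqLT ν.ord v) {c : Ordinal.{u}} (hc : c < v)
include hν hc

theorem markerStage_strictMonoOn (w : Ordinal.{u} → Ordinal.{u}) :
    StrictMonoOn (markerStage g c w) (Iio ν.ord) := by
  have ho := Cardinal.isSuccLimit_ord hν.aleph0_le
  suffices ∀ b < ν.ord, ∀ a < b, markerStage g c w a < markerStage g c w b from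
    fun a _ b hb hab => this b hb a hab
  intro b
  induction b using limitRecOn with
  | zero => exact fun _ a ha => absurd ha not_lt_zero
  | add_one b ih =>
    intro hb a ha
    have hstep : markerStage g c w b < markerStage g c w (b + 1) := by
      rw [markerStage_add_one]
      exact (SeqLT.le_cover _ _).trans_lt
        (SeqLT.lt_snoc (SeqLT.len_add_one_lt_of_isSuccLimit ho _) hc)
    rcases (lt_add_one_iff.mp ha).lt_or_eq with ha | rfl
    · exact (ih ((lt_add_one b).trans hb) a ha).trans hstep
    · exact hstep
  | limit l hl ih =>
    intro hlo a ha
    have hmono : Monotone fun β : Iio l => markerStage g c w β := fun β γ hβγ =>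
      hβγ.lt_or_eq.elim (fun h => (ih γ γ.2 (γ.2.trans hlo) β h).le) fun h => h ▸ le_rfl
    rw [markerStage_of_isSuccLimit g c w hl]
    exact (SeqLT.le_union (SeqLT.iSup_len_lt_of_isRegular hν hlo _) hmono.directed_le
      ⟨a, ha⟩).trans_lt (SeqLT.lt_snoc (SeqLT.len_add_one_lt_of_isSuccLimit ho _) hc)

theorem len_markerStage_of_isSuccLimit (w : Ordinal.{u} → Ordinal.{u}) {l : Ordinal.{u}}
    (hl : IsSuccLimit l) (hlo : l < ν.ord) :
    (markerStage g c w l).len = (⨆ a : Iio l, (markerStage g c w a).len) + 1 := by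
  have hlen := SeqLT.iSup_len_lt_of_isRegular hν hlo fun a => markerStage g c w a
  rw [markerStage_of_isSuccLimit g c w hl, SeqLT.len_snoc _ hc, SeqLT.len_union hlen]
  exact SeqLT.len_add_one_lt_of_isSuccLimit (Cardinal.isSuccLimit_ord hν.aleph0_le) _

theorem markerHom_strictMono : StrictMono (markerHom g c) := by
  have ho := Cardinal.isSuccLimit_ord hν.aleph0_le
  intro s t hst
  show markerStage g c s.val s.len < markerStage g c t.val t.len
  rw [markerStage_congr g c s.val hst.1.2]
  exact markerStage_strictMonoOn hν g hc t.val (hst.2.trans (t.len_lt_of_isSuccLimit ho))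
    (t.len_lt_of_isSuccLimit ho) hst.2

theorem exists_isClubIn_val_eq_of_fStarVal {x y : SeqFull ν.ord v}
    (hxy : FStarVal (markerHom g c) x y) : ∃ C, IsClubIn C ν.ord ∧ ∀ i ∈ C, y.val i = c := by
  have ho := Cardinal.isSuccLimit_ord hν.aleph0_le
  obtain ⟨hpre, hunb⟩ := hxy
  refine ⟨_, isClubIn_setOf_add_one_mem_image (L := fun a => (markerStage g c x.val a).len)
    (fun a ha b hb hab => (markerStage_strictMonoOn hν g hc x.val ha hb hab).2)
    (fun a _ => not_isSuccLimit_len_markerStage ho g hc x.val a)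
    (fun l hlo hl => len_markerStage_of_isSuccLimit hν g hc x.val hl hlo)
    (fun a _ => (markerStage g c x.val a).len_lt_of_isSuccLimit ho)
    (fun β hβ => ?_), ?_⟩
  · obtain ⟨a, ha, hβa⟩ := hunb β hβ
    exact ⟨a, ha, markerHom_res g c x ha ▸ hβa⟩
  · rintro m ⟨a, ha, hm⟩
    replace hm : (markerStage g c x.val a).len = m + 1 := hm
    have hym := hpre a ha m (by rw [markerHom_res g c x ha, hm]; exact lt_add_one m)
    rw [markerHom_res g c x ha, markerStage_val_of_len_eq_add_one ho g hc x.val hm] at hym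
    exact hym.symm

end Regular

section Cardinality

open Cardinal

theorem mk_seqLT_le {ν : Cardinal.{u}} (hν : ℵ₀ ≤ ν) (hpow : powerlt ν ν = ν) :
    #(SeqLT ν.ord ν.ord) ≤ #(Iio ν.ord) := by
  set o := ν.ord
  have ho := isSuccLimit_ord hν
  let code : SeqLT o o → Σ a : Iio o, (Iio (a : Ordinal.{u}) → Iio o) :=
    fun s => ⟨⟨s.len, s.len_lt_of_isSuccLimit ho⟩, fun β => ⟨s.val β, s.val_lt β β.2⟩⟩
  let decode (z : Σ a : Iio o, (Iio (a : Ordinal.{u}) → Iio o)) (β : Ordinal.{u}) :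
      Ordinal.{u} :=
    if h : β < z.1 then z.2 ⟨β, h⟩ else 0
  have hdecode (s : SeqLT o o) : decode (code s) = s.val := by
    funext β
    by_cases hβ : β < s.len
    · exact dif_pos hβ
    · exact (dif_neg hβ).trans (s.val_zero β (not_lt.mp hβ)).symm
  have hcode : Function.Injective code := fun s t h =>
    SeqLT.ext_of_len_eq (congrArg (fun z => (z.1 : Ordinal.{u})) h)
      (congrFun (by rw [← hdecode s, ← hdecode t, h]))
  have hfiber (a : Iio o) : #(Iio (a : Ordinal.{u}) → Iio o) ≤ lift.{u + 1} ν := by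
    rw [← power_def, Cardinal.mk_Iio_ordinal, Cardinal.mk_Iio_ordinal, card_ord, ← lift_power,
      Cardinal.lift_le]
    exact (le_powerlt ν (lt_ord.mp a.2)).trans_eq hpow
  calc #(SeqLT o o) ≤ #(Σ a : Iio o, (Iio (a : Ordinal.{u}) → Iio o)) :=
        mk_le_of_injective hcode
    _ ≤ sum fun _ : Iio o => lift.{u + 1} ν := mk_sigma _ ▸ sum_le_sum _ _ hfiber
    _ = lift.{u + 1} ν * lift.{u + 1} ν := by rw [sum_const', Cardinal.mk_Iio_ordinal, card_ord]
    _ = #(Iio o) := by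
        rw [mul_eq_self (aleph0_le_lift.mpr hν), Cardinal.mk_Iio_ordinal, card_ord]

theorem exists_surjOn_Iio_ord_seqLT {ν : Cardinal.{u}} (hν : ℵ₀ ≤ ν) (hpow : powerlt ν ν = ν) :
    ∃ g : Ordinal.{u} → SeqLT ν.ord ν.ord, SurjOn g (Iio ν.ord) univ := by
  obtain ⟨e⟩ := le_def _ _ |>.mp (mk_seqLT_le hν hpow)
  have : Nonempty (SeqLT ν.ord ν.ord) := ⟨SeqLT.empty _ _⟩
  have he : Function.Injective fun t => (e t : Ordinal.{u}) :=
    Subtype.val_injective.comp e.injective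
  exact ⟨Function.invFun _, fun t _ => ⟨e t, (e t).2, Function.leftInverse_invFun he t⟩⟩

end Cardinality

theorem almostBaire_of_isClubIn_val_eq {ν : Cardinal.{u}} (hν : ν.IsRegular)
    (hpow : Cardinal.powerlt ν ν = ν) {c : Ordinal.{u}} (hc : c < ν.ord)
    {A : Set (SeqFull ν.ord ν.ord)}
    (hA : ∀ y : SeqFull ν.ord ν.ord, ∀ C, IsClubIn C ν.ord → (∀ i ∈ C, y.val i = c) → y ∈ A) :
    AlmostBaire A := by
  obtain ⟨g, hg⟩ := exists_surjOn_Iio_ord_seqLT hν.aleph0_le hpow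
  refine ⟨markerHom g c, markerHom_strictMono hν g hc,
    markerHom_isDenseMap (Cardinal.isSuccLimit_ord hν.aleph0_le) g hc hg,
    Or.inl fun x y hxy => ?_⟩
  obtain ⟨C, hC, hyC⟩ := exists_isClubIn_val_eq_of_fStarVal hν g hc hxy
  exact hA y C hC hyC

/-- For an infinite regular cardinal `ν` with `ν^{<ν} = ν`, the sets `Cl_ν` and `Ns_ν`
are almost Baire subsets of `ν^ν`. -/
theorem statement5 (ν : Cardinal.{u}) (hreg : ν.IsRegular)
    (hpow : Cardinal.powerlt ν ν = ν) :
    AlmostBaire (ClSet ν.ord ν.ord) ∧ AlmostBaire (NsSet ν.ord ν.ord) := by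
  have ho := Cardinal.isSuccLimit_ord hreg.aleph0_le
  exact ⟨almostBaire_of_isClubIn_val_eq hreg hpow (one_lt_of_isSuccLimit ho)
      fun _ C hC hy => ⟨C, hC, fun i hi => (hy i hi).trans_ne one_ne_zero⟩,
    almostBaire_of_isClubIn_val_eq hreg hpow ho.bot_lt fun _ C hC hy => ⟨C, hC, hy⟩⟩

end
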